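/- arXiv:2408.08638 — 2 statements merged into one kernel-verified Lean document; each statement's English description precedes it below -/
import Mathlib

section
/- One-sided tail bounds from a quartic exponential-moment estimate (core of the proof of Proposition 6.1): let M be a real random variable on a probability space and A, B > 0 be such that E[exp(μM)] ≤ exp(A·μ⁴ + B·μ²) for every μ > 0. Then (i) for every u with 0 < u ≤ 4·B^{3/2}/√A one has ℙ(M > u) ≤ exp(−u²/(8B)), and (ii) for every u > 8·B^{3/2}/√A one has ℙ(M > u) ≤ exp(−(3/8)·(u⁴/A)^{1/3}). -/
/-!
Chernoff's bound turns the moment estimate into `ℙ(M > u) ≤ exp (A t⁴ + B t² - t u)` for every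
`t > 0`. Below the threshold the quadratic term dominates and `t = u / (4B)` gives the Gaussian
tail; above it the quartic term dominates and `t` is chosen with `u = 8 A t³`, so that the exponent
becomes `-7 A t⁴ + B t² ≤ -6 A t⁴ = -(3/8) (u⁴ / A)^{1/3}` once `B ≤ A t²`.
-/

open MeasureTheory Real

theorem measure_lt_le_exp_of_lintegral_exp_le {Ω : Type*} [MeasurableSpace Ω] {μ : Measure Ω}
    {M : Ω → ℝ} (hM : AEMeasurable M μ) {t K : ℝ} (ht : 0 ≤ t)
    (hmgf : ∫⁻ ω, ENNReal.ofReal (exp (t * M ω)) ∂μ ≤ ENNReal.ofReal (exp K)) (u : ℝ) :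
    μ {ω | u < M ω} ≤ ENNReal.ofReal (exp (K - t * u)) := by
  have hmarkov := mul_meas_ge_le_lintegral₀ (by fun_prop : AEMeasurable
    (fun ω ↦ ENNReal.ofReal (exp (t * M ω))) μ) (ENNReal.ofReal (exp (t * u)))
  have hsub : {ω | u < M ω} ⊆
      {ω | ENNReal.ofReal (exp (t * u)) ≤ ENNReal.ofReal (exp (t * M ω))} := fun ω hω ↦
    ENNReal.ofReal_le_ofReal (exp_le_exp.2 (mul_le_mul_of_nonneg_left (le_of_lt hω) ht))
  calc μ {ω | u < M ω}
      = ENNReal.ofReal (exp (-(t * u))) * (ENNReal.ofReal (exp (t * u)) * μ {ω | u < M ω}) := by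
        rw [← mul_assoc, ← ENNReal.ofReal_mul (exp_nonneg _), ← exp_add, neg_add_cancel, exp_zero,
          ENNReal.ofReal_one, one_mul]
    _ ≤ ENNReal.ofReal (exp (-(t * u))) * ∫⁻ ω, ENNReal.ofReal (exp (t * M ω)) ∂μ := by
        gcongr
        exact (mul_le_mul_right (measure_mono hsub) _).trans hmarkov
    _ ≤ ENNReal.ofReal (exp (-(t * u))) * ENNReal.ofReal (exp K) := by gcongr
    _ = ENNReal.ofReal (exp (K - t * u)) := by
        rw [← ENNReal.ofReal_mul (exp_nonneg _), ← exp_add]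
        ring_nf

theorem le_mul_rpow_three_halves_div_sqrt_iff {A B c u : ℝ} (hA : 0 < A) (hB : 0 ≤ B)
    (hc : 0 ≤ c) (hu : 0 ≤ u) :
    u ≤ c * B ^ ((3 : ℝ) / 2) / √A ↔ A * u ^ 2 ≤ c ^ 2 * B ^ 3 := by
  have hsq : (c * B ^ ((3 : ℝ) / 2) / √A) ^ 2 = c ^ 2 * B ^ 3 / A := by
    rw [div_pow, mul_pow, sq_sqrt hA.le, ← rpow_mul_natCast hB]
    norm_num
  rw [← pow_le_pow_iff_left₀ hu (by positivity) two_ne_zero, hsq, le_div_iff₀ hA, mul_comm]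

section QuarticMGF

variable {Ω : Type*} [MeasurableSpace Ω] {μ : Measure Ω} {M : Ω → ℝ} {A B : ℝ}

theorem measure_lt_le_exp_neg_sq_of_quartic_mgf (hM : AEMeasurable M μ) (hB : 0 < B)
    (hmgf : ∀ t : ℝ, 0 < t →
      ∫⁻ ω, ENNReal.ofReal (exp (t * M ω)) ∂μ ≤ ENNReal.ofReal (exp (A * t ^ 4 + B * t ^ 2)))
    {u : ℝ} (hu : 0 < u) (hAu : A * u ^ 2 ≤ 16 * B ^ 3) :
    μ {ω | u < M ω} ≤ ENNReal.ofReal (exp (-u ^ 2 / (8 * B))) := by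
  have ht : 0 < u / (4 * B) := by positivity
  refine (measure_lt_le_exp_of_lintegral_exp_le hM ht.le (hmgf _ ht) u).trans ?_
  refine ENNReal.ofReal_le_ofReal (exp_le_exp.2 ?_)
  have hquartic : A * (u / (4 * B)) ^ 4 ≤ u ^ 2 / (16 * B) := by
    rw [div_pow, mul_div_assoc', div_le_div_iff₀ (by positivity) (by positivity)]
    nlinarith [mul_le_mul_of_nonneg_right hAu (by positivity : 0 ≤ u ^ 2 * B)]
  have hrest : B * (u / (4 * B)) ^ 2 - u / (4 * B) * u = -(3 * u ^ 2 / (16 * B)) := by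
    field_simp
    ring
  have hgoal : -u ^ 2 / (8 * B) = u ^ 2 / (16 * B) - 3 * u ^ 2 / (16 * B) := by
    field_simp
    ring
  linarith

theorem measure_lt_le_exp_of_quartic_mgf (hM : AEMeasurable M μ) (hA : 0 < A)
    (hmgf : ∀ t : ℝ, 0 < t →
      ∫⁻ ω, ENNReal.ofReal (exp (t * M ω)) ∂μ ≤ ENNReal.ofReal (exp (A * t ^ 4 + B * t ^ 2)))
    {u : ℝ} (hu : 0 < u) (hBu : 64 * B ^ 3 < A * u ^ 2) :
    μ {ω | u < M ω} ≤ ENNReal.ofReal (exp (-(3 / 8) * (u ^ 4 / A) ^ ((1 : ℝ) / 3))) := by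
  set t := (u / (8 * A)) ^ ((1 : ℝ) / 3)
  have ht : 0 < t := by positivity
  have ht3 : t ^ 3 = u / (8 * A) := by
    rw [show t = (u / (8 * A)) ^ ((3 : ℕ)⁻¹ : ℝ) by norm_num [t]]
    exact rpow_inv_natCast_pow (by positivity) three_ne_zero
  have hu_eq : u = 8 * A * t ^ 3 := by
    rw [ht3]
    field_simp
  have hBt : B ≤ A * t ^ 2 := by
    refine (lt_of_pow_lt_pow_left₀ 3 (by positivity) ?_).le
    rw [hu_eq] at hBu
    linarith [show A * (8 * A * t ^ 3) ^ 2 = 64 * (A * t ^ 2) ^ 3 by ring]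
  have hexp : (u ^ 4 / A) ^ ((1 : ℝ) / 3) = 16 * A * t ^ 4 := by
    rw [show u ^ 4 / A = (16 * A * t ^ 4) ^ 3 by rw [hu_eq]; field_simp; ring, one_div]
    exact pow_rpow_inv_natCast (by positivity) three_ne_zero
  refine (measure_lt_le_exp_of_lintegral_exp_le hM ht.le (hmgf t ht) u).trans ?_
  refine ENNReal.ofReal_le_ofReal (exp_le_exp.2 ?_)
  rw [hexp, hu_eq]
  nlinarith [mul_le_mul_of_nonneg_right hBt (sq_nonneg t)]

end QuarticMGF

theorem tail_bounds_from_quartic_mgf_general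
    {Ω : Type*} [MeasurableSpace Ω] (μ : Measure Ω)
    (M : Ω → ℝ) (hM : Measurable M) (A B : ℝ) (hA : 0 < A) (hB : 0 < B)
    (hmgf : ∀ t : ℝ, 0 < t →
      ∫⁻ ω, ENNReal.ofReal (Real.exp (t * M ω)) ∂μ ≤
        ENNReal.ofReal (Real.exp (A * t ^ 4 + B * t ^ 2))) :
    (∀ u : ℝ, 0 < u → u ≤ 4 * B ^ ((3 : ℝ) / 2) / Real.sqrt A →
      μ {ω | u < M ω} ≤ ENNReal.ofReal (Real.exp (-u ^ 2 / (8 * B)))) ∧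
    (∀ u : ℝ, 8 * B ^ ((3 : ℝ) / 2) / Real.sqrt A < u →
      μ {ω | u < M ω} ≤
        ENNReal.ofReal (Real.exp (-(3 / 8) * (u ^ 4 / A) ^ ((1 : ℝ) / 3)))) := by
  constructor
  · intro u hu hu_le
    rw [le_mul_rpow_three_halves_div_sqrt_iff hA hB.le (by norm_num) hu.le] at hu_le
    exact measure_lt_le_exp_neg_sq_of_quartic_mgf hM.aemeasurable hB hmgf hu (by linarith)
  · intro u hu_gt
    have hu : 0 < u := lt_of_le_of_lt (by positivity) hu_gt
    rw [← not_le, le_mul_rpow_three_halves_div_sqrt_iff hA hB.le (by norm_num) hu.le] at hu_gt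
    exact measure_lt_le_exp_of_quartic_mgf hM.aemeasurable hA hmgf hu (by linarith)

/-- One-sided tail bounds from a quartic exponential-moment estimate
(core of the proof of Proposition 6.1). -/
theorem tail_bounds_from_quartic_mgf
    {Ω : Type*} [MeasurableSpace Ω] (μ : Measure Ω) [IsProbabilityMeasure μ]
    (M : Ω → ℝ) (hM : Measurable M) (A B : ℝ) (hA : 0 < A) (hB : 0 < B)
    (hmgf : ∀ t : ℝ, 0 < t →
      ∫⁻ ω, ENNReal.ofReal (Real.exp (t * M ω)) ∂μ ≤
        ENNReal.ofReal (Real.exp (A * t ^ 4 + B * t ^ 2))) :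
    (∀ u : ℝ, 0 < u → u ≤ 4 * B ^ ((3 : ℝ) / 2) / Real.sqrt A →
      μ {ω | u < M ω} ≤ ENNReal.ofReal (Real.exp (-u ^ 2 / (8 * B)))) ∧
    (∀ u : ℝ, 8 * B ^ ((3 : ℝ) / 2) / Real.sqrt A < u →
      μ {ω | u < M ω} ≤
        ENNReal.ofReal (Real.exp (-(3 / 8) * (u ^ 4 / A) ^ ((1 : ℝ) / 3)))) :=
  tail_bounds_from_quartic_mgf_general μ M hM A B hA hB hmgf
end

section
/- Two-sided tail bounds from a quartic exponential-moment estimate (the tail bound (21) of Proposition 6.1 in abstract form): let M be a real random variable on a probability space and A, B > 0 be such that E[exp(μM)] ≤ exp(A·μ⁴ + B·μ²) and E[exp(−μM)] ≤ exp(A·μ⁴ + B·μ²) for every μ > 0. Then ℙ(|M| > u) ≤ 2·exp(−u²/(32B)) for every u with 0 < u ≤ 8·B^{3/2}/√A, and ℙ(|M| > u) ≤ 2·exp(−(3/8)·(u⁴/A)^{1/3}) for every u > 8·B^{3/2}/√A. -/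
open MeasureTheory Real

lemma chernoff_aux {Ω : Type*} [MeasurableSpace Ω] (μ : Measure Ω)
    (f : Ω → ℝ) (hf : Measurable f) (t u C : ℝ) (ht : 0 < t)
    (h : ∫⁻ ω, ENNReal.ofReal (Real.exp (t * f ω)) ∂μ ≤ ENNReal.ofReal (Real.exp C)) :
    μ {ω | u < f ω} ≤ ENNReal.ofReal (Real.exp (C - t * u)) := by
  have hmeas : AEMeasurable (fun ω => ENNReal.ofReal (Real.exp (t * f ω))) μ :=
    ((Real.measurable_exp.comp ((hf.const_mul t))).ennreal_ofReal).aemeasurable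
  set ε : ENNReal := ENNReal.ofReal (Real.exp (t * u)) with hε
  have hε0 : ε ≠ 0 := by
    simp [hε, ENNReal.ofReal_eq_zero, not_le, Real.exp_pos]
  have hεtop : ε ≠ ⊤ := ENNReal.ofReal_ne_top
  have hsub : {ω | u < f ω} ⊆ {ω | ε ≤ ENNReal.ofReal (Real.exp (t * f ω))} := by
    intro ω hω
    exact ENNReal.ofReal_le_ofReal (Real.exp_le_exp.2
      (mul_le_mul_of_nonneg_left (le_of_lt hω) ht.le))
  have key := mul_meas_ge_le_lintegral₀ hmeas ε
  have h2 : ε * μ {ω | u < f ω} ≤ ENNReal.ofReal (Real.exp C) :=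
    le_trans (mul_le_mul_right (measure_mono hsub) ε) (le_trans key h)
  have h3 : μ {ω | u < f ω} ≤ ENNReal.ofReal (Real.exp C) / ε := by
    rw [ENNReal.le_div_iff_mul_le (Or.inl hε0) (Or.inl hεtop), mul_comm]
    exact h2
  refine h3.trans (le_of_eq ?_)
  rw [hε, ← ENNReal.ofReal_div_of_pos (Real.exp_pos _), ← Real.exp_sub]

lemma two_sided_aux {Ω : Type*} [MeasurableSpace Ω] (μ : Measure Ω)
    (M : Ω → ℝ) (hM : Measurable M) (t u C D : ℝ) (ht : 0 < t)
    (h1 : ∫⁻ ω, ENNReal.ofReal (Real.exp (t * M ω)) ∂μ ≤ ENNReal.ofReal (Real.exp C))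
    (h2 : ∫⁻ ω, ENNReal.ofReal (Real.exp (t * (-M ω))) ∂μ ≤ ENNReal.ofReal (Real.exp C))
    (hCD : C - t * u ≤ D) :
    μ {ω | u < |M ω|} ≤ ENNReal.ofReal (2 * Real.exp D) := by
  have b1 := chernoff_aux μ M hM t u C ht h1
  have b2 := chernoff_aux μ (fun ω => -M ω) hM.neg t u C ht h2
  have hsub : {ω | u < |M ω|} ⊆ {ω | u < M ω} ∪ {ω | u < -M ω} := by
    intro ω hω
    have hω' : u < |M ω| := hω
    rcases lt_abs.1 hω' with h | h
    · exact Or.inl h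
    · exact Or.inr h
  calc μ {ω | u < |M ω|} ≤ μ ({ω | u < M ω} ∪ {ω | u < -M ω}) := measure_mono hsub
    _ ≤ μ {ω | u < M ω} + μ {ω | u < -M ω} := measure_union_le _ _
    _ ≤ ENNReal.ofReal (Real.exp (C - t*u)) + ENNReal.ofReal (Real.exp (C - t*u)) :=
        add_le_add b1 b2
    _ = ENNReal.ofReal (2 * Real.exp (C - t*u)) := by
        rw [← ENNReal.ofReal_add (Real.exp_pos _).le (Real.exp_pos _).le]; ring_nf
    _ ≤ ENNReal.ofReal (2 * Real.exp D) := by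
        exact ENNReal.ofReal_le_ofReal (by
          have := Real.exp_le_exp.2 hCD; linarith)

/-- Two-sided tail bounds from a quartic exponential-moment estimate
(the tail bound (21) of Proposition 6.1, abstract form). -/
theorem two_sided_tail_bounds_from_quartic_mgf
    {Ω : Type*} [MeasurableSpace Ω] (μ : Measure Ω) [IsProbabilityMeasure μ]
    (M : Ω → ℝ) (hM : Measurable M) (A B : ℝ) (hA : 0 < A) (hB : 0 < B)
    (hmgf : ∀ t : ℝ, 0 < t →
      ∫⁻ ω, ENNReal.ofReal (Real.exp (t * M ω)) ∂μ ≤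
        ENNReal.ofReal (Real.exp (A * t ^ 4 + B * t ^ 2)))
    (hmgf' : ∀ t : ℝ, 0 < t →
      ∫⁻ ω, ENNReal.ofReal (Real.exp (t * (-M ω))) ∂μ ≤
        ENNReal.ofReal (Real.exp (A * t ^ 4 + B * t ^ 2))) :
    (∀ u : ℝ, 0 < u → u ≤ 8 * B ^ ((3 : ℝ) / 2) / Real.sqrt A →
      μ {ω | u < |M ω|} ≤ ENNReal.ofReal (2 * Real.exp (-u ^ 2 / (32 * B)))) ∧
    (∀ u : ℝ, 8 * B ^ ((3 : ℝ) / 2) / Real.sqrt A < u →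
      μ {ω | u < |M ω|} ≤
        ENNReal.ofReal (2 * Real.exp (-(3 / 8) * (u ^ 4 / A) ^ ((1 : ℝ) / 3)))) := by
  have hB32 : (B ^ ((3:ℝ)/2)) ^ 2 = B ^ 3 := by
    rw [← Real.rpow_natCast (B ^ ((3:ℝ)/2)) 2, ← Real.rpow_mul hB.le,
      ← Real.rpow_natCast B 3]
    norm_num
  have hsA : Real.sqrt A > 0 := Real.sqrt_pos.2 hA
  constructor
  · intro u hu hu'
    -- A * u^2 ≤ 64 * B^3
    have h1 : u * Real.sqrt A ≤ 8 * B ^ ((3:ℝ)/2) := by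
      rw [div_eq_mul_inv] at hu'
      calc u * Real.sqrt A ≤ (8 * B ^ ((3:ℝ)/2) * (Real.sqrt A)⁻¹) * Real.sqrt A :=
            mul_le_mul_of_nonneg_right hu' hsA.le
        _ = 8 * B ^ ((3:ℝ)/2) := by field_simp
    have hAB : A * u ^ 2 ≤ 64 * B ^ 3 := by
      have h2 : (u * Real.sqrt A)^2 ≤ (8 * B ^ ((3:ℝ)/2))^2 :=
        pow_le_pow_left₀ (by positivity) h1 2
      have h3 : Real.sqrt A ^ 2 = A := Real.sq_sqrt hA.le
      nlinarith [hB32]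
    set t : ℝ := u / (8 * B) with htdef
    have ht : 0 < t := div_pos hu (by linarith)
    refine two_sided_aux μ M hM t u _ _ ht (hmgf t ht) (hmgf' t ht) ?_
    -- A t^4 + B t^2 - t u ≤ -u^2/(32 B)
    have hB4 : 0 < B^4 := by positivity
    rw [htdef]
    have e1 : A * (u/(8*B))^4 + B*(u/(8*B))^2 - (u/(8*B))*u - (-u^2/(32*B))
        = (A*u^2*u^2 - 320*B^3*u^2)/(4096*B^4) := by
      field_simp; ring
    have e2 : (A*u^2*u^2 - 320*B^3*u^2)/(4096*B^4) ≤ 0 :=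
      div_nonpos_of_nonpos_of_nonneg (by nlinarith [sq_nonneg u]) (by positivity)
    linarith
  · intro u hu'
    have hu : 0 < u := lt_trans (by positivity) hu'
    set s : ℝ := (u / A) ^ ((1:ℝ)/3) with hsdef
    have hs : 0 < s := Real.rpow_pos_of_pos (div_pos hu hA) _
    have hs3 : s ^ 3 = u / A := by
      rw [hsdef, ← Real.rpow_natCast ((u/A) ^ ((1:ℝ)/3)) 3, ← Real.rpow_mul (div_pos hu hA).le]
      norm_num
    have hueq : u = A * s ^ 3 := by
      field_simp at hs3; linarith [hs3]
    have hroot : (u ^ 4 / A) ^ ((1:ℝ)/3) = A * s ^ 4 := by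
      have h1 : u ^ 4 / A = (A * s ^ 4) ^ 3 := by
        rw [hueq]; field_simp
      rw [h1, ← Real.rpow_natCast (A * s^4) 3, ← Real.rpow_mul (by positivity)]
      norm_num
    -- 4 B < A s^2
    have h64 : 64 * B ^ 3 < A * u ^ 2 := by
      have h1 : 8 * B ^ ((3:ℝ)/2) < u * Real.sqrt A := by
        rw [div_lt_iff₀ hsA] at hu'
        linarith
      have h2 : (8 * B ^ ((3:ℝ)/2))^2 < (u * Real.sqrt A)^2 :=
        pow_lt_pow_left₀ h1 (by positivity) (by norm_num)
      have h3 : Real.sqrt A ^ 2 = A := Real.sq_sqrt hA.le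
      nlinarith [hB32]
    have hAs : 4 * B < A * s ^ 2 := by
      have hcube : (4 * B) ^ 3 < (A * s ^ 2) ^ 3 := by
        have : A * u ^ 2 = A^3 * s^6 := by rw [hueq]; ring
        nlinarith [h64]
      exact lt_of_pow_lt_pow_left₀ 3 (by positivity) hcube
    have ht : 0 < s / 2 := by linarith
    refine two_sided_aux μ M hM (s/2) u _ _ ht (hmgf _ ht) (hmgf' _ ht) ?_
    rw [hroot, hueq]
    nlinarith [mul_pos hs hs, sq_nonneg s, mul_lt_mul_of_pos_right hAs (mul_pos hs hs)]
end
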